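/- Let r̂ ∈ (-1,1) be fixed and h'(r) = ln((1+r)/(1-r)). Then there exist constants δ₀ > 0 and C₀ > 0, independent of α, such that for every α ∈ (0,1] and every r ∈ (-1,1), one has φ(α)·h'(r)·(r - r̂) ≥ δ₀·φ(α)·|h'(r)| - C₀, where φ : (0,1] → (0,∞) is bounded above by some M > 0. -/
import Mathlib

theorem stmt6 (φ : ℝ → ℝ) (M : ℝ) (hM : 0 < M)
    (hφ : ∀ α ∈ Set.Ioc (0:ℝ) 1, 0 < φ α ∧ φ α ≤ M)
    (r₀ : ℝ) (hr₀ : r₀ ∈ Set.Ioo (-1:ℝ) 1) :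
    ∃ δ₀ > (0:ℝ), ∃ C₀ > (0:ℝ), ∀ α ∈ Set.Ioc (0:ℝ) 1, ∀ r ∈ Set.Ioo (-1:ℝ) 1,
      φ α * Real.log ((1 + r) / (1 - r)) * (r - r₀)
        ≥ δ₀ * (φ α * |Real.log ((1 + r) / (1 - r))|) - C₀ := by
  obtain ⟨h1, h2⟩ := hr₀
  set g : ℝ → ℝ := fun r => Real.log ((1 + r) / (1 - r)) with hgdef
  have gmono : ∀ r1 r2 : ℝ, -1 < r1 → r2 < 1 → r1 ≤ r2 → g r1 ≤ g r2 := by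
    intro r1 r2 ha hb hle
    have hd1 : (0:ℝ) < 1 - r1 := by linarith
    have hd2 : (0:ℝ) < 1 - r2 := by linarith
    have hn1 : (0:ℝ) < 1 + r1 := by linarith
    apply Real.log_le_log (div_pos hn1 hd1)
    rw [div_le_div_iff₀ hd1 hd2]
    nlinarith
  set tp : ℝ := (1 + max r₀ 0) / 2 with htpdef
  set tm : ℝ := (min r₀ 0 - 1) / 2 with htmdef
  have hmax0 : (0:ℝ) ≤ max r₀ 0 := le_max_right _ _
  have hmax1 : max r₀ 0 < 1 := max_lt h2 one_pos
  have hmin0 : min r₀ 0 ≤ 0 := min_le_right _ _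
  have hmin1 : -1 < min r₀ 0 := lt_min h1 (by norm_num)
  have htp0 : (0:ℝ) < tp := by rw [htpdef]; linarith
  have htp1 : tp < 1 := by rw [htpdef]; linarith
  have htm0 : tm < 0 := by rw [htmdef]; linarith
  have htm1 : -1 < tm := by rw [htmdef]; linarith
  set L : ℝ := max |g tp| |g tm| with hLdef
  have hL0 : (0:ℝ) ≤ L := le_trans (abs_nonneg _) (le_max_left _ _)
  set δ₀ : ℝ := min ((1 - r₀) / 2) ((1 + r₀) / 2) with hδdef
  have hδ : 0 < δ₀ := lt_min (by linarith) (by linarith)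
  set C₀ : ℝ := δ₀ * M * L + 2 * (M * L) + 1 with hCdef
  have hC : 0 < C₀ := by positivity
  refine ⟨δ₀, hδ, C₀, hC, ?_⟩
  intro α hα r hr
  obtain ⟨hφ1, hφ2⟩ := hφ α hα
  obtain ⟨hra, hrb⟩ := hr
  have hden : (0:ℝ) < 1 - r := by linarith
  have hnum : (0:ℝ) < 1 + r := by linarith
  show φ α * g r * (r - r₀) ≥ δ₀ * (φ α * |g r|) - C₀
  rcases le_or_gt tp r with hcase | hcase
  · -- r ≥ tp > 0
    have hg0 : 0 ≤ g r := Real.log_nonneg (by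
      rw [le_div_iff₀ hden]
      have : 0 < r := lt_of_lt_of_le htp0 hcase
      linarith)
    have hrδ : δ₀ ≤ r - r₀ := by
      have := min_le_left ((1 - r₀) / 2) ((1 + r₀) / 2)
      have := le_max_left r₀ (0:ℝ)
      rw [htpdef] at hcase
      linarith
    rw [abs_of_nonneg hg0]
    nlinarith [mul_nonneg (mul_nonneg hφ1.le hg0) (by linarith : (0:ℝ) ≤ r - r₀ - δ₀)]
  rcases le_or_gt r tm with hcase2 | hcase2
  · -- r ≤ tm < 0
    have hg0 : g r ≤ 0 := Real.log_nonpos (by positivity) (by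
      rw [div_le_one hden]
      have : r < 0 := lt_of_le_of_lt hcase2 htm0
      linarith)
    have hrδ : δ₀ ≤ r₀ - r := by
      have := min_le_right ((1 - r₀) / 2) ((1 + r₀) / 2)
      have := min_le_left r₀ (0:ℝ)
      rw [htmdef] at hcase2
      linarith
    rw [abs_of_nonpos hg0]
    nlinarith [mul_nonneg (mul_nonneg hφ1.le (by linarith : (0:ℝ) ≤ -g r))
      (by linarith : (0:ℝ) ≤ r₀ - r - δ₀)]
  · -- middle region
    have hgu : g r ≤ g tp := gmono r tp hra htp1 hcase.le
    have hgl : g tm ≤ g r := gmono tm r htm1 hrb hcase2.le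
    have hGL : |g r| ≤ L := by
      rw [abs_le]
      constructor
      · have : -|g tm| ≤ g tm := neg_abs_le _
        have : |g tm| ≤ L := le_max_right _ _
        linarith [neg_abs_le (g tm), le_max_right |g tp| |g tm|]
      · linarith [le_abs_self (g tp), le_max_left |g tp| |g tm|]
    have habs : |r - r₀| ≤ 2 := by rw [abs_le]; constructor <;> linarith
    have h3 : |φ α * g r * (r - r₀)| = φ α * |g r| * |r - r₀| := by
      rw [abs_mul, abs_mul, abs_of_pos hφ1]
    have h4 : φ α * |g r| ≤ M * L :=
      mul_le_mul hφ2 hGL (abs_nonneg _) hM.le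
    have h5 : φ α * |g r| * |r - r₀| ≤ M * L * 2 :=
      mul_le_mul h4 habs (abs_nonneg _) (by positivity)
    have h6 : δ₀ * (φ α * |g r|) ≤ δ₀ * (M * L) :=
      mul_le_mul_of_nonneg_left h4 hδ.le
    have h7 : -(φ α * |g r| * |r - r₀|) ≤ φ α * g r * (r - r₀) := by
      rw [← h3]; exact neg_abs_le _
    rw [hCdef]
    nlinarith
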